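/- Let W = W₁ ⊕ W₂ be an orthogonal direct sum of symplectic spaces and let g = g₁ ⊕ g₂ ∈ Sp(W) with gᵢ ∈ Sp(Wᵢ). Then (g-1)W = (g₁-1)W₁ ⊕ (g₂-1)W₂, and det((J_g)|_{J_gW}) = det((J_{g₁})|_{J_{g₁}W₁}) · det((J_{g₂})|_{J_{g₂}W₂}), where J = J₁ ⊕ J₂ is a compatible positive complex structure preserving both W₁ and W₂ and J_g = J⁻¹(g-1). -/

import Mathlib

/-!
Everything in sight is block diagonal for `W₁ × W₂`: `g - 1 = (g₁ - 1) × (g₂ - 1)` and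
`J_g = J_{g₁} × J_{g₂}`. The range of a product map is the product of the ranges, and on
`range f × range g` the restriction of `f × g` is conjugate to the product of the restrictions,
whose determinant is the product of the determinants.
-/

namespace Submodule

variable {R M N : Type*} [Semiring R] [AddCommMonoid M] [Module R M] [AddCommMonoid N] [Module R N]

def prodEquiv (p : Submodule R M) (q : Submodule R N) : p.prod q ≃ₗ[R] p × q where
  toFun x := (⟨x.1.1, x.2.1⟩, ⟨x.1.2, x.2.2⟩)
  invFun y := ⟨(y.1.1, y.2.1), ⟨y.1.2, y.2.2⟩⟩
  map_add' _ _ := rfl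
  map_smul' _ _ := rfl

end Submodule

namespace LinearMap

theorem det_restrict_of_eq {R M : Type*} [CommRing R] [AddCommGroup M] [Module R M]
    (f : M →ₗ[R] M) {p p' : Submodule R M} (hpp' : p = p')
    (hp : ∀ x ∈ p, f x ∈ p) (hp' : ∀ x ∈ p', f x ∈ p') :
    LinearMap.det (f.restrict hp) = LinearMap.det (f.restrict hp') := by
  subst hpp'
  rfl

variable {K M N : Type*} [Field K] [AddCommGroup M] [Module K M] [FiniteDimensional K M]
  [AddCommGroup N] [Module K N] [FiniteDimensional K N]

theorem det_restrict_prodMap (f : M →ₗ[K] M) (g : N →ₗ[K] N) {p : Submodule K M}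
    {q : Submodule K N} (hf : ∀ x ∈ p, f x ∈ p) (hg : ∀ x ∈ q, g x ∈ q)
    (hfg : ∀ x ∈ p.prod q, f.prodMap g x ∈ p.prod q) :
    LinearMap.det ((f.prodMap g).restrict hfg) =
      LinearMap.det (f.restrict hf) * LinearMap.det (g.restrict hg) := by
  have hconj : (f.prodMap g).restrict hfg = ((p.prodEquiv q).symm : p × q →ₗ[K] _) ∘ₗ
      (f.restrict hf).prodMap (g.restrict hg) ∘ₗ (p.prodEquiv q : _ →ₗ[K] p × q) := rfl
  have hdet := LinearMap.det_conj ((f.restrict hf).prodMap (g.restrict hg)) (p.prodEquiv q).symm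
  rw [LinearEquiv.symm_symm] at hdet
  rw [hconj, hdet, det_prodMap]

theorem det_restrict_range_prodMap (f : M →ₗ[K] M) (g : N →ₗ[K] N) :
    LinearMap.det ((f.prodMap g).restrict (p := range (f.prodMap g)) (q := range (f.prodMap g))
        fun x _ => mem_range_self _ x) =
      LinearMap.det (f.restrict (p := range f) (q := range f) fun x _ => mem_range_self f x) *
      LinearMap.det (g.restrict (p := range g) (q := range g) fun x _ => mem_range_self g x) := by
  rw [det_restrict_of_eq _ (range_prodMap f g) _
      (range_prodMap f g ▸ fun x _ => mem_range_self _ x),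
    det_restrict_prodMap]

end LinearMap

theorem stmt13_general
    (W₁ W₂ : Type*) [AddCommGroup W₁] [Module ℝ W₁] [FiniteDimensional ℝ W₁]
    [AddCommGroup W₂] [Module ℝ W₂] [FiniteDimensional ℝ W₂]
    (J₁ : W₁ ≃ₗ[ℝ] W₁) (J₂ : W₂ ≃ₗ[ℝ] W₂)
    (g₁ : W₁ ≃ₗ[ℝ] W₁)
    (g₂ : W₂ ≃ₗ[ℝ] W₂)
    (Jg : (W₁ × W₂) →ₗ[ℝ] (W₁ × W₂)) (Jg₁ : W₁ →ₗ[ℝ] W₁) (Jg₂ : W₂ →ₗ[ℝ] W₂)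
    (hJg : Jg = (J₁.prodCongr J₂).symm.toLinearMap ∘ₗ ((g₁.prodCongr g₂).toLinearMap - LinearMap.id))
    (hJg₁ : Jg₁ = J₁.symm.toLinearMap ∘ₗ (g₁.toLinearMap - LinearMap.id))
    (hJg₂ : Jg₂ = J₂.symm.toLinearMap ∘ₗ (g₂.toLinearMap - LinearMap.id)) :
    LinearMap.range ((g₁.prodCongr g₂).toLinearMap - LinearMap.id) =
      (LinearMap.range (g₁.toLinearMap - LinearMap.id)).prod
        (LinearMap.range (g₂.toLinearMap - LinearMap.id)) ∧
    LinearMap.det (Jg.restrict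
        (p := LinearMap.range Jg) (q := LinearMap.range Jg)
        (fun x _ => LinearMap.mem_range_self Jg x)) =
      LinearMap.det (Jg₁.restrict
        (p := LinearMap.range Jg₁) (q := LinearMap.range Jg₁)
        (fun x _ => LinearMap.mem_range_self Jg₁ x)) *
      LinearMap.det (Jg₂.restrict
        (p := LinearMap.range Jg₂) (q := LinearMap.range Jg₂)
        (fun x _ => LinearMap.mem_range_self Jg₂ x)) := by
  have hsub : (g₁.prodCongr g₂).toLinearMap - LinearMap.id =
      (g₁.toLinearMap - LinearMap.id).prodMap (g₂.toLinearMap - LinearMap.id) := rfl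
  have hJg_prod : Jg = Jg₁.prodMap Jg₂ := by
    rw [hJg, hJg₁, hJg₂]
    rfl
  refine ⟨by rw [hsub, LinearMap.range_prodMap], ?_⟩
  subst hJg_prod
  exact LinearMap.det_restrict_range_prodMap Jg₁ Jg₂

/-- for `g = g₁ ⊕ g₂` on `W = W₁ ⊕ W₂` and `J = J₁ ⊕ J₂` a compatible positive
complex structure preserving the summands, `(g-1)W = (g₁-1)W₁ ⊕ (g₂-1)W₂` and the
determinant of `J_g` restricted to its image is the product of those of `J_{g₁}`, `J_{g₂}`. -/
theorem stmt13
    (W₁ W₂ : Type*) [AddCommGroup W₁] [Module ℝ W₁] [FiniteDimensional ℝ W₁]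
    [AddCommGroup W₂] [Module ℝ W₂] [FiniteDimensional ℝ W₂]
    (Ω₁ : W₁ →ₗ[ℝ] W₁ →ₗ[ℝ] ℝ) (Ω₂ : W₂ →ₗ[ℝ] W₂ →ₗ[ℝ] ℝ)
    (halt₁ : ∀ w, Ω₁ w w = 0) (hnd₁ : ∀ w, (∀ v, Ω₁ w v = 0) → w = 0)
    (halt₂ : ∀ w, Ω₂ w w = 0) (hnd₂ : ∀ w, (∀ v, Ω₂ w v = 0) → w = 0)
    (J₁ : W₁ ≃ₗ[ℝ] W₁) (J₂ : W₂ ≃ₗ[ℝ] W₂)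
    (hJ₁sp : ∀ u v, Ω₁ (J₁ u) (J₁ v) = Ω₁ u v) (hJ₁2 : ∀ w, J₁ (J₁ w) = -w)
    (hJ₁pos : ∀ w, w ≠ 0 → 0 < Ω₁ (J₁ w) w)
    (hJ₂sp : ∀ u v, Ω₂ (J₂ u) (J₂ v) = Ω₂ u v) (hJ₂2 : ∀ w, J₂ (J₂ w) = -w)
    (hJ₂pos : ∀ w, w ≠ 0 → 0 < Ω₂ (J₂ w) w)
    (g₁ : W₁ ≃ₗ[ℝ] W₁) (hg₁ : ∀ u v, Ω₁ (g₁ u) (g₁ v) = Ω₁ u v)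
    (g₂ : W₂ ≃ₗ[ℝ] W₂) (hg₂ : ∀ u v, Ω₂ (g₂ u) (g₂ v) = Ω₂ u v)
    (Jg : (W₁ × W₂) →ₗ[ℝ] (W₁ × W₂)) (Jg₁ : W₁ →ₗ[ℝ] W₁) (Jg₂ : W₂ →ₗ[ℝ] W₂)
    (hJg : Jg = (J₁.prodCongr J₂).symm.toLinearMap ∘ₗ ((g₁.prodCongr g₂).toLinearMap - LinearMap.id))
    (hJg₁ : Jg₁ = J₁.symm.toLinearMap ∘ₗ (g₁.toLinearMap - LinearMap.id))
    (hJg₂ : Jg₂ = J₂.symm.toLinearMap ∘ₗ (g₂.toLinearMap - LinearMap.id)) :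
    LinearMap.range ((g₁.prodCongr g₂).toLinearMap - LinearMap.id) =
      (LinearMap.range (g₁.toLinearMap - LinearMap.id)).prod
        (LinearMap.range (g₂.toLinearMap - LinearMap.id)) ∧
    LinearMap.det (Jg.restrict
        (p := LinearMap.range Jg) (q := LinearMap.range Jg)
        (fun x _ => LinearMap.mem_range_self Jg x)) =
      LinearMap.det (Jg₁.restrict
        (p := LinearMap.range Jg₁) (q := LinearMap.range Jg₁)
        (fun x _ => LinearMap.mem_range_self Jg₁ x)) *
      LinearMap.det (Jg₂.restrict
        (p := LinearMap.range Jg₂) (q := LinearMap.range Jg₂)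
        (fun x _ => LinearMap.mem_range_self Jg₂ x)) :=
  stmt13_general W₁ W₂ J₁ J₂ g₁ g₂ Jg Jg₁ Jg₂ hJg hJg₁ hJg₂
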